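/- arXiv:1409.6709 — 4 statements merged into one kernel-verified Lean document; each statement's English description precedes it below -/
import Mathlib

section
/- Let Γ be a simple graph with vertex set X and let Y ⊆ X. The subgroup of the right-angled Artin group A(Γ) generated by the images of the vertices in Y is isomorphic to the right-angled Artin group A(Γ[Y]) of the induced subgraph on Y. In particular, the canonical homomorphism A(Γ[Y]) → A(Γ) is injective. -/
/-!
Sending every vertex of `Y` to itself and every other vertex to `1` respects the commutation
relations of `Γ`, so it defines a retraction `A(Γ) → A(Γ[Y])`. This retraction is a left
inverse of the canonical map, which is therefore injective, and an injective homomorphism is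
an isomorphism onto its image: the subgroup generated by the vertices of `Y`.
-/

/-- The defining relations of the right-angled Artin group of a simple graph:
one commutator for each edge. -/
def raagRels {X : Type} (Γ : SimpleGraph X) : Set (FreeGroup X) :=
  {r | ∃ x y : X, Γ.Adj x y ∧
    r = FreeGroup.of x * FreeGroup.of y * (FreeGroup.of x)⁻¹ * (FreeGroup.of y)⁻¹}

/-- The right-angled Artin group (partially commutative group) of a simple graph. -/
abbrev RAAG {X : Type} (Γ : SimpleGraph X) : Type := PresentedGroup (raagRels Γ)

theorem PresentedGroup.range_eq_closure_range_of {α G : Type*} [Group G]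
    {rels : Set (FreeGroup α)} (φ : PresentedGroup rels →* G) :
    φ.range = Subgroup.closure (Set.range fun x => φ (PresentedGroup.of x)) := by
  rw [MonoidHom.range_eq_map, ← PresentedGroup.closure_range_of, MonoidHom.map_closure,
    ← Set.range_comp]
  rfl

namespace RAAG

variable {X : Type} {Γ : SimpleGraph X}

theorem commute_of_adj {x y : X} (h : Γ.Adj x y) :
    Commute (PresentedGroup.of x : RAAG Γ) (PresentedGroup.of y) :=
  commutatorElement_eq_one_iff_commute.mp (PresentedGroup.one_of_mem ⟨x, y, h, rfl⟩)

def lift {G : Type*} [Group G] (f : X → G) (hf : ∀ x y, Γ.Adj x y → Commute (f x) (f y)) :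
    RAAG Γ →* G :=
  PresentedGroup.toGroup (f := f) <| by
    rintro _ ⟨x, y, h, rfl⟩
    simpa [commutatorElement_def] using commutatorElement_eq_one_iff_commute.mpr (hf x y h)

@[simp]
theorem lift_of {G : Type*} [Group G] (f : X → G)
    (hf : ∀ x y, Γ.Adj x y → Commute (f x) (f y)) (x : X) :
    lift f hf (PresentedGroup.of x) = f x :=
  PresentedGroup.toGroup.of _

open Classical in
noncomputable def retraction (Γ : SimpleGraph X) (Y : Set X) : RAAG Γ →* RAAG (Γ.induce Y) :=
  lift (fun x => if h : x ∈ Y then PresentedGroup.of ⟨x, h⟩ else 1) <| by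
    intro x y hxy
    by_cases hx : x ∈ Y
    · by_cases hy : y ∈ Y
      · simpa only [dif_pos hx, dif_pos hy] using
          commute_of_adj (Γ := Γ.induce Y) (x := ⟨x, hx⟩) (y := ⟨y, hy⟩) hxy
      · simp only [dif_neg hy, Commute.one_right]
    · simp only [dif_neg hx, Commute.one_left]

theorem retraction_of_mem (Y : Set X) {x : X} (hx : x ∈ Y) :
    retraction Γ Y (PresentedGroup.of x) = PresentedGroup.of ⟨x, hx⟩ := by
  simp [retraction, hx]

theorem leftInverse_retraction {Y : Set X} {α : RAAG (Γ.induce Y) →* RAAG Γ}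
    (hα : ∀ y : Y, α (PresentedGroup.of y) = PresentedGroup.of (y : X)) :
    Function.LeftInverse (retraction Γ Y) α := by
  have : (retraction Γ Y).comp α = MonoidHom.id _ :=
    PresentedGroup.ext fun y => by simp [hα y, retraction_of_mem Y y.2]
  exact DFunLike.congr_fun this

end RAAG

/-- For a subset `Y` of the vertices, the canonical homomorphism
`A(Γ[Y]) → A(Γ)` (sending each generator `y ∈ Y` to itself) is injective,
and the subgroup of `A(Γ)` generated by the images of the vertices in `Y`
is isomorphic to `A(Γ[Y])`. -/
theorem stmt3 {X : Type} (Γ : SimpleGraph X) (Y : Set X)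
    (α : RAAG (Γ.induce Y) →* RAAG Γ)
    (hα : ∀ y : Y, α (PresentedGroup.of y) = PresentedGroup.of (y : X)) :
    Function.Injective α ∧
      Nonempty ((Subgroup.closure ((fun x : X => (PresentedGroup.of x : RAAG Γ)) '' Y))
        ≃* RAAG (Γ.induce Y)) := by
  have hleft := RAAG.leftInverse_retraction hα
  have hrange : α.range =
      Subgroup.closure ((fun x : X => (PresentedGroup.of x : RAAG Γ)) '' Y) := by
    rw [PresentedGroup.range_eq_closure_range_of, Set.image_eq_range]
    simp only [hα]
  exact ⟨hleft.injective,
    ⟨(MulEquiv.subgroupCongr hrange.symm).trans (α.ofLeftInverse hleft).symm⟩⟩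
end

section
/- The group ℤ × F₂ does not satisfy the Howson property: there exist finitely generated subgroups H and K of ℤ × F₂ whose intersection H ∩ K is not finitely generated. -/
/-!
Write `a = of 0`, `b = of 1` for the generators of `F₂ = FreeGroup (Fin 2)` and `σ : F₂ → ℤ` for
the exponent sum of `a`. The graph `H` of `σ` and `K = 1 × F₂` are images of `F₂`, hence finitely
generated, and `H ∩ K` projects isomorphically onto `ker σ`.

The homomorphism `F₂ → ℤ ≀ ℤ`, `a ↦ t`, `b ↦ δ₀`, lifts `σ` along the projection to `⟨t⟩`, so it
maps `ker σ` into the base group `ℤ^(ℤ)`, and it maps `a^m b a^{-m} ∈ ker σ` to `δ_m`. A finitely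
generated subgroup of the base consists of functions supported on one finite set, so it cannot
contain every `δ_m`: `ker σ` is not finitely generated.
-/

open Multiplicative SemidirectProduct

theorem Subgroup.FG.map {G G' : Type*} [Group G] [Group G'] {P : Subgroup G} (hP : P.FG)
    (f : G →* G') : (P.map f).FG := by
  classical
  obtain ⟨S, rfl⟩ := hP
  exact ⟨S.image f, by rw [Finset.coe_image, MonoidHom.map_closure]⟩

theorem MonoidHom.map_snd_range_prod_id_inf_range_inr {G H : Type*} [Group G] [Group H]
    (f : G →* H) :
    ((f.prod (MonoidHom.id G)).range ⊓ (MonoidHom.inr H G).range).map (MonoidHom.snd H G) =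
      f.ker := by
  ext g
  simp [Prod.ext_iff, eq_comm]

namespace SemidirectProduct

theorem mem_map_inl_iff {N G : Type*} [Group N] [Group G] {φ : G →* MulAut N}
    {S : Subgroup N} {g : N ⋊[φ] G} : g ∈ S.map inl ↔ g.right = 1 ∧ g.left ∈ S := by
  constructor
  · rintro ⟨n, hn, rfl⟩
    exact ⟨rfl, hn⟩
  · rintro ⟨hright, hleft⟩
    exact ⟨g.left, hleft, by ext <;> simp [hright]⟩

theorem exists_finset_support_subset_of_fg {α M G : Type*} [AddCommGroup M] [Group G]
    {φ : G →* MulAut (Multiplicative (α →₀ M))} {L : Subgroup (Multiplicative (α →₀ M) ⋊[φ] G)}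
    (hL : L.FG) (hbase : ∀ g ∈ L, g.right = 1) :
    ∃ T : Finset α, ∀ g ∈ L, (toAdd g.left).support ⊆ T := by
  classical
  obtain ⟨S, rfl⟩ := hL
  set T := S.biUnion fun g => (toAdd g.left).support
  set B := (Finsupp.supported M ℤ (T : Set α)).toAddSubgroup.toSubgroup.map
    (inl : _ →* Multiplicative (α →₀ M) ⋊[φ] G)
  have mem_B (g) : g ∈ B ↔ g.right = 1 ∧ (toAdd g.left).support ⊆ T := by
    simp only [B, mem_map_inl_iff, Multiplicative.mem_toSubgroup, Submodule.mem_toAddSubgroup,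
      Finsupp.mem_supported, Finset.coe_subset]
  have hle : Subgroup.closure ↑S ≤ B := (Subgroup.closure_le B).2 fun s hs =>
    (mem_B s).2 ⟨hbase s (Subgroup.subset_closure hs),
      Finset.subset_biUnion_of_mem (fun g => (toAdd g.left).support) hs⟩
  exact ⟨T, fun g hg => ((mem_B g).1 (hle hg)).2⟩

end SemidirectProduct

section Lamplighter

attribute [local instance] Finsupp.comapSMul Finsupp.comapMulAction Finsupp.comapDistribMulAction

noncomputable def shift : Multiplicative ℤ →* MulAut (Multiplicative (ℤ →₀ ℤ)) :=
  (MulAutMultiplicative (ℤ →₀ ℤ)).symm.toMonoidHom.comp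
    (DistribMulAction.toAddAut (Multiplicative ℤ) (ℤ →₀ ℤ))

theorem shift_ofAdd_single (z n k : ℤ) :
    shift (ofAdd z) (ofAdd (Finsupp.single n k)) = ofAdd (Finsupp.single (z + n) k) :=
  congrArg ofAdd (Finsupp.comapSMul_single (ofAdd z) n k)

end Lamplighter

abbrev Lamplighter := Multiplicative (ℤ →₀ ℤ) ⋊[shift] Multiplicative ℤ

def exponentSumA : FreeGroup (Fin 2) →* Multiplicative ℤ :=
  FreeGroup.lift ![ofAdd 1, 1]

noncomputable def toLamplighter : FreeGroup (Fin 2) →* Lamplighter :=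
  FreeGroup.lift ![inr (ofAdd 1), inl (ofAdd (Finsupp.single 0 1))]

theorem rightHom_comp_toLamplighter : rightHom.comp toLamplighter = exponentSumA := by
  ext i
  fin_cases i <;> simp [toLamplighter, exponentSumA]

theorem toLamplighter_conj (m : ℤ) :
    toLamplighter (FreeGroup.of 0 ^ m * FreeGroup.of 1 * (FreeGroup.of 0 ^ m)⁻¹) =
      inl (ofAdd (Finsupp.single m 1)) := by
  have ha : toLamplighter (FreeGroup.of 0) = inr (ofAdd 1) := by simp [toLamplighter]
  have hb : toLamplighter (FreeGroup.of 1) = inl (ofAdd (Finsupp.single 0 1)) := by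
    simp [toLamplighter]
  have hpow : (inr (ofAdd 1) : Lamplighter) ^ m = inr (ofAdd m) := by
    rw [← map_zpow, ← ofAdd_zsmul, smul_eq_mul, mul_one]
  rw [map_mul, map_mul, map_inv, map_zpow, ha, hb, hpow, ← map_inv, ← inl_aut,
    shift_ofAdd_single, add_zero]

theorem conj_mem_ker_exponentSumA (m : ℤ) :
    FreeGroup.of 0 ^ m * FreeGroup.of 1 * (FreeGroup.of 0 ^ m)⁻¹ ∈ exponentSumA.ker := by
  simp [exponentSumA]

theorem not_fg_ker_exponentSumA : ¬ exponentSumA.ker.FG := by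
  intro hFG
  have hbase : ∀ g ∈ exponentSumA.ker.map toLamplighter, g.right = 1 := by
    rintro _ ⟨w, hw, rfl⟩
    exact (DFunLike.congr_fun rightHom_comp_toLamplighter w).trans hw
  obtain ⟨T, hT⟩ :=
    SemidirectProduct.exists_finset_support_subset_of_fg (hFG.map toLamplighter) hbase
  obtain ⟨m, hm⟩ := Infinite.exists_notMem_finset T
  have hsupp := hT _ ⟨_, conj_mem_ker_exponentSumA m, rfl⟩
  rw [toLamplighter_conj, left_inl, toAdd_ofAdd, Finsupp.support_single _ one_ne_zero,
    Finset.singleton_subset_iff] at hsupp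
  exact hm hsupp

/-- `ℤ × F₂` does not satisfy the Howson property: it has two finitely
generated subgroups whose intersection is not finitely generated. -/
theorem stmt5 :
    ∃ H K : Subgroup (Multiplicative ℤ × FreeGroup (Fin 2)),
      H.FG ∧ K.FG ∧ ¬ (H ⊓ K).FG := by
  refine ⟨(exponentSumA.prod (MonoidHom.id _)).range, (MonoidHom.inr _ _).range,
    (Group.fg_iff_subgroup_fg _).1 inferInstance, (Group.fg_iff_subgroup_fg _).1 inferInstance,
    fun hFG => not_fg_ker_exponentSumA ?_⟩
  rw [← exponentSumA.map_snd_range_prod_id_inf_range_inr]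
  exact hFG.map _
end

section
/- In G = ℤ × F₂ with ℤ = ⟨t⟩ and F₂ free on a, b, let H = ⟨(0,a), (0,b)⟩ and K = ⟨(t,a), (0,b)⟩. Then H ∩ K = {(0, w) : w ∈ F₂, the total exponent of a in w is 0}. -/
/-!
`H` is the image of `F₂` under `w ↦ (1, w)` and `K` its image under `w ↦ (|w|ₐ, w)`, since each
is generated by the images of `a` and `b`. So `H` is the kernel of the first projection and `K`
is the (transposed) graph of `|·|ₐ`; an element of both is `(1, w)` with `|w|ₐ = 0`.
-/

namespace MonoidHom

variable {G N : Type*} [Group G] [Group N]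

theorem mem_range_inr_iff {p : G × N} : p ∈ (inr G N).range ↔ p.1 = 1 :=
  ⟨fun ⟨_, hw⟩ => hw ▸ rfl, fun h => ⟨p.2, Prod.ext h.symm rfl⟩⟩

theorem mem_range_prod_id_iff (f : N →* G) {p : G × N} :
    p ∈ (f.prod (MonoidHom.id N)).range ↔ p.1 = f p.2 :=
  ⟨fun ⟨_, hw⟩ => hw ▸ rfl, fun h => ⟨p.2, Prod.ext h.symm rfl⟩⟩

end MonoidHom

theorem FreeGroup.closure_pair_eq_range {G : Type*} [Group G] (φ : FreeGroup (Fin 2) →* G) :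
    Subgroup.closure {φ (of 0), φ (of 1)} = φ.range := by
  have hgen : ({φ (of 0), φ (of 1)} : Set G) = φ '' Set.range of := by
    rw [← Set.range_comp, Fin.range_fin_succ, Set.range_unique]
    rfl
  rw [hgen, ← MonoidHom.map_closure, FreeGroup.closure_range_of, MonoidHom.range_eq_map]

/-- In `G = ℤ × F₂` with `ℤ = ⟨t⟩` and `F₂` free on `a`, `b`, let
`H = ⟨(1,a),(1,b)⟩` and `K = ⟨(t,a),(1,b)⟩` (multiplicative notation).
Then `H ⊓ K` consists exactly of the elements `(1, w)` where the total
exponent of `a` in `w` is `0`. -/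
theorem stmt6 :
    let t : Multiplicative ℤ := Multiplicative.ofAdd 1
    let a : FreeGroup (Fin 2) := FreeGroup.of 0
    let b : FreeGroup (Fin 2) := FreeGroup.of 1
    let expA : FreeGroup (Fin 2) →* Multiplicative ℤ :=
      FreeGroup.lift (fun i => if i = 0 then Multiplicative.ofAdd (1 : ℤ) else 1)
    let H : Subgroup (Multiplicative ℤ × FreeGroup (Fin 2)) :=
      Subgroup.closure {(1, a), (1, b)}
    let K : Subgroup (Multiplicative ℤ × FreeGroup (Fin 2)) :=
      Subgroup.closure {(t, a), (1, b)}
    ∀ p : Multiplicative ℤ × FreeGroup (Fin 2),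
      p ∈ H ⊓ K ↔ p.1 = 1 ∧ expA p.2 = 1 := by
  intro t a b expA H K p
  have hH : H = (MonoidHom.inr _ _).range := by
    rw [← FreeGroup.closure_pair_eq_range]
    rfl
  have hK : K = (expA.prod (MonoidHom.id _)).range := by
    rw [← FreeGroup.closure_pair_eq_range]
    simp [K, expA, t, a, b]
  rw [Subgroup.mem_inf, hH, hK, MonoidHom.mem_range_inr_iff, MonoidHom.mem_range_prod_id_iff]
  constructor
  · rintro ⟨h1, h2⟩
    exact ⟨h1, h2 ▸ h1⟩
  · rintro ⟨h1, h2⟩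
    exact ⟨h1, h1.trans h2.symm⟩
end

section
/- The free product of two fully residually free groups is fully residually free. -/
/-!
A nontrivial element of a free product `∗ᵢ Gᵢ` is a nonempty reduced word, and only finitely many
letters occur in the reduced words of a finite set `S`. Choosing for each `i` a map from `Gᵢ` to a
free group that kills none of the letters of index `i`, the induced map to the free product of
these free groups (itself free) sends every reduced word to a reduced word of the same length, so
it kills no element of `S`. The binary free product `G ∗ H` embeds into `∗_{b : Bool}` of `G, H`.
-/

/-- A group `G` is fully residually free if for every finite subset `S ⊆ G`
with `1 ∉ S` there is a homomorphism `φ` from `G` to some free group with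
`φ s ≠ 1` for all `s ∈ S`. -/
def FullyResiduallyFree (G : Type) [Group G] : Prop :=
  ∀ S : Finset G, (1 : G) ∉ S →
    ∃ (ι : Type) (φ : G →* FreeGroup ι), ∀ s ∈ S, φ s ≠ 1

open Monoid

namespace FullyResiduallyFree

theorem of_injective {G K : Type} [Group G] [Group K] {f : G →* K} (hf : Function.Injective f)
    (hK : FullyResiduallyFree K) : FullyResiduallyFree G := by
  classical
  intro S hS
  have h1 : (1 : K) ∉ S.image f := by
    rw [Finset.mem_image]
    rintro ⟨s, hs, hfs⟩
    exact hS (hf (hfs.trans (map_one f).symm) ▸ hs)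
  obtain ⟨ι, φ, hφ⟩ := hK _ h1
  exact ⟨ι, φ.comp f, fun s hs => hφ _ (Finset.mem_image_of_mem f hs)⟩

end FullyResiduallyFree

namespace Monoid.CoprodI.Word

variable {ι : Type*} {M N : ι → Type*} [∀ i, Monoid (M i)] [∀ i, Monoid (N i)]

def map (ψ : ∀ i, M i →* N i) (w : Word M) (hψ : ∀ l ∈ w.toList, ψ l.1 l.2 ≠ 1) : Word N where
  toList := w.toList.map fun l => ⟨l.1, ψ l.1 l.2⟩
  ne_one := by
    simp only [List.mem_map]
    rintro _ ⟨l, hl, rfl⟩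
    exact hψ l hl
  chain_ne :=
    List.isChain_map_of_isChain (fun (l : Σ i, M i) => (⟨l.1, ψ l.1 l.2⟩ : Σ i, N i))
      (fun _ _ h => h) w.chain_ne

theorem prod_map (ψ : ∀ i, M i →* N i) (w : Word M) (hψ : ∀ l ∈ w.toList, ψ l.1 l.2 ≠ 1) :
    (w.map ψ hψ).prod = lift (fun i => of.comp (ψ i)) w.prod := by
  simp [map, prod, map_list_prod, Function.comp_def]

theorem prod_ne_one {w : Word M} (hw : w ≠ empty) : w.prod ≠ 1 := by
  classical
  intro h
  exact hw (equiv.symm.injective (h.trans prod_empty.symm))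

theorem map_ne_empty (ψ : ∀ i, M i →* N i) {w : Word M} (hw : w ≠ empty)
    (hψ : ∀ l ∈ w.toList, ψ l.1 l.2 ≠ 1) : w.map ψ hψ ≠ empty := by
  intro h
  apply hw
  ext1
  simpa [map] using congrArg toList h

theorem lift_prod_ne_one (ψ : ∀ i, M i →* N i) {w : Word M} (hw : w ≠ empty)
    (hψ : ∀ l ∈ w.toList, ψ l.1 l.2 ≠ 1) : lift (fun i => of.comp (ψ i)) w.prod ≠ 1 :=
  prod_map ψ w hψ ▸ prod_ne_one (map_ne_empty ψ hw hψ)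

end Monoid.CoprodI.Word

namespace Monoid.CoprodI

variable {ι : Type*} {M : ι → Type*} [∀ i, Monoid (M i)]

theorem equiv_ne_empty [DecidableEq ι] [∀ i, DecidableEq (M i)] {m : CoprodI M} (hm : m ≠ 1) :
    Word.equiv m ≠ Word.empty := by
  intro h
  exact hm (by rw [← Word.equiv.symm_apply_apply m, h]; exact Word.prod_empty)

end Monoid.CoprodI

open CoprodI in
theorem FullyResiduallyFree.coprodI {ι : Type} {G : ι → Type} [∀ i, Group (G i)]
    (hG : ∀ i, FullyResiduallyFree (G i)) : FullyResiduallyFree (CoprodI G) := by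
  classical
  intro S hS
  set L : Finset (Σ i, G i) := S.biUnion fun s => (Word.equiv s).toList.toFinset
  have hL : ∀ i, (1 : G i) ∉ L.preimage (Sigma.mk i) sigma_mk_injective.injOn := by
    intro i h1
    simp only [Finset.mem_preimage, L, Finset.mem_biUnion, List.mem_toFinset] at h1
    obtain ⟨s, -, hs⟩ := h1
    exact (Word.equiv s).ne_one _ hs rfl
  choose κ φ hφ using fun i => hG i _ (hL i)
  let B := FreeGroupBasis.coprodI fun i => FreeGroupBasis.ofFreeGroup (κ i)
  refine ⟨Σ i, κ i, B.repr.toMonoidHom.comp (lift fun i => of.comp (φ i)), fun s hs => ?_⟩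
  have hs1 : s ≠ 1 := fun h => hS (h ▸ hs)
  have hletters : ∀ l ∈ (Word.equiv s).toList, φ l.1 l.2 ≠ 1 := fun l hl =>
    hφ l.1 _ (by simpa [L] using ⟨s, hs, hl⟩)
  rw [MonoidHom.comp_apply, MulEquiv.coe_toMonoidHom, MulEquiv.map_ne_one_iff,
    ← Word.equiv.symm_apply_apply s]
  exact Word.lift_prod_ne_one φ (equiv_ne_empty hs1) hletters

namespace Monoid.Coprod

universe u

variable {G H : Type u} [Group G] [Group H]

instance condGroup : ∀ b, Group (cond b G H)
  | true => ‹_›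
  | false => ‹_›

def toCoprodI : Coprod G H →* CoprodI fun b => cond b G H :=
  lift (CoprodI.of (M := fun b => cond b G H) (i := true))
    (CoprodI.of (M := fun b => cond b G H) (i := false))

def ofCoprodI : (CoprodI fun b => cond b G H) →* Coprod G H :=
  CoprodI.lift fun b => b.rec (motive := fun b => cond b G H →* Coprod G H) inr inl

theorem ofCoprodI_comp_toCoprodI : ofCoprodI.comp toCoprodI = MonoidHom.id (Coprod G H) := by
  ext <;> simp [toCoprodI, ofCoprodI]

theorem toCoprodI_injective : Function.Injective (toCoprodI (G := G) (H := H)) :=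
  Function.LeftInverse.injective (g := ofCoprodI) (DFunLike.congr_fun ofCoprodI_comp_toCoprodI)

end Monoid.Coprod

/-- The free product (coproduct) of two fully residually free groups is
fully residually free. -/
theorem stmt12 {G H : Type} [Group G] [Group H]
    (hG : FullyResiduallyFree G) (hH : FullyResiduallyFree H) :
    FullyResiduallyFree (Monoid.Coprod G H) := by
  have hcond : ∀ b, FullyResiduallyFree (cond b G H) := by
    rintro (_ | _)
    exacts [hH, hG]
  exact (FullyResiduallyFree.coprodI hcond).of_injective Coprod.toCoprodI_injective
end
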